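/- arXiv:2601.09277 — 2 statements merged into one kernel-verified Lean document; each statement's English description precedes it below -/
import Mathlib

section
/- Let ᾱ be a 2-cocycle on 𝒮̄^ε satisfying ᾱ(L_m,W_n) = mδ_{m+n,0}c₂ + δ_{m+n,0}c₃ for constants c₂,c₃ ∈ ℂ. Then the cocycle identity applied to L, G, G forces c₂ = 0. -/
/-- Basis of 𝒮̄^ε : `L m`, `W m` even (`m ∈ ℤ`), and `G r` odd, where `G r`
represents `G_{r+ε}` (so the odd indices run over `ℤ + ε`). -/
inductive Bb : Type
  | L : ℤ → Bb
  | W : ℤ → Bb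
  | G : ℤ → Bb
  deriving DecidableEq

/-- Parity: `L, W` even, `G` odd. -/
def parity : Bb → ℕ
  | Bb.G _ => 1
  | _ => 0

open Bb in
/-- The bracket of 𝒮̄^ε on basis elements (ε ∈ {0, 1/2}); `G r` = `G_{r+ε}` and
`[G_r,G_s] = (r+s)W_{r+s}` lands on the `W`-index `r + s + 2ε ∈ ℤ`. -/
noncomputable def brE (ε : ℚ) : Bb → Bb → (Bb →₀ ℂ)
  | L m, L n => Finsupp.single (L (m + n)) ((n : ℂ) - m)
  | L m, W n => Finsupp.single (W (m + n)) ((m : ℂ) + n)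
  | W n, L m => -Finsupp.single (W (m + n)) ((m : ℂ) + n)
  | L m, G n => Finsupp.single (G (m + n)) ((n : ℂ) + (ε : ℂ))
  | G n, L m => -Finsupp.single (G (m + n)) ((n : ℂ) + (ε : ℂ))
  | G m, G n => Finsupp.single (W (m + n + (if ε = 0 then 0 else 1)))
      ((m : ℂ) + n + 2 * (ε : ℂ))
  | _, _ => 0

/-- Extension of a bilinear form (given on basis elements) applied to
a basis element and a linear combination. -/
noncomputable def apL (α : Bb → Bb → ℂ) (x : Bb) (v : Bb →₀ ℂ) : ℂ :=
  v.sum fun b c => c * α x b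

/-- Extension of a bilinear form applied to a linear combination and a basis element. -/
noncomputable def apR (α : Bb → Bb → ℂ) (v : Bb →₀ ℂ) (z : Bb) : ℂ :=
  v.sum fun b c => c * α b z

/-- `α` is a 2-cocycle on 𝒮̄^ε : super skew-symmetry and the super Jacobi identity. -/
def IsCocycle (ε : ℚ) (α : Bb → Bb → ℂ) : Prop :=
  (∀ x y : Bb, α x y = -((-1 : ℂ) ^ (parity x * parity y) * α y x)) ∧
  (∀ x y z : Bb,
    apL α x (brE ε y z) =
      apR α (brE ε x y) z + (-1 : ℂ) ^ (parity x * parity y) * apL α y (brE ε x z))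

lemma key (ε : ℚ) (α : Bb → Bb → ℂ) (hα : IsCocycle ε α) (m r s : ℤ) :
    ((r : ℂ) + s + 2 * (ε : ℂ)) * α (Bb.L m) (Bb.W (r + s + (if ε = 0 then 0 else 1))) =
      ((r : ℂ) + (ε : ℂ)) * α (Bb.G (m + r)) (Bb.G s)
        + ((s : ℂ) + (ε : ℂ)) * α (Bb.G r) (Bb.G (m + s)) := by
  have h := hα.2 (Bb.L m) (Bb.G r) (Bb.G s)
  simp only [brE, parity, apL, apR, Nat.zero_mul, pow_zero, one_mul] at h
  rw [Finsupp.sum_single_index (by simp), Finsupp.sum_single_index (by simp),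
      Finsupp.sum_single_index (by simp)] at h
  convert h using 2

lemma skewGG (ε : ℚ) (α : Bb → Bb → ℂ) (hα : IsCocycle ε α) (a b : ℤ) :
    α (Bb.G a) (Bb.G b) = α (Bb.G b) (Bb.G a) := by
  have h := hα.1 (Bb.G a) (Bb.G b)
  simp only [parity, Nat.one_mul, pow_one] at h
  rw [h]; ring

/-- If a 2-cocycle ᾱ on 𝒮̄^ε satisfies ᾱ(L_m, W_n) = m δ_{m+n,0} c₂ + δ_{m+n,0} c₃,
then the cocycle identity applied to L, G, G forces c₂ = 0. -/
theorem stmt9 (ε : ℚ) (hε : ε = 0 ∨ ε = 1/2)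
    (α : Bb → Bb → ℂ) (hα : IsCocycle ε α) (c2 c3 : ℂ)
    (hLW : ∀ m n : ℤ, α (Bb.L m) (Bb.W n) =
      (m : ℂ) * (if m + n = 0 then 1 else 0) * c2 + (if m + n = 0 then 1 else 0) * c3) :
    c2 = 0 := by
  rcases hε with hε | hε <;> subst hε
  · -- ε = 0
    have h11 := key 0 α hα (-2) 1 1
    have h22 := key 0 α hα (-4) 2 2
    have h12 := key 0 α hα (-3) 1 2
    have s1 := skewGG 0 α hα (-1) 1
    have s2 := skewGG 0 α hα (-2) 2
    rw [hLW] at h11 h22 h12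
    norm_num at h11 h22 h12
    linear_combination -h12 + (1/4) * h22 - (1/2) * s2 + h11 + s1
  · -- ε = 1/2
    have h00 := key (1/2) α hα (-1) 0 0
    have h11 := key (1/2) α hα (-3) 1 1
    have h01 := key (1/2) α hα (-2) 0 1
    have s0 := skewGG (1/2) α hα (-1) 0
    have s1 := skewGG (1/2) α hα (-2) 1
    rw [hLW] at h00 h11 h01
    norm_num at h00 h11 h01
    linear_combination (3/2) * h00 + (1/6) * h11 - (1/4) * s1 - h01 + (3/4) * s0
end

section
/- Let ᾱ be a 2-cocycle on the Neveu–Schwarz type algebra 𝒮̄^{1/2}. Then ᾱ(W_m, G_r) = 0 for all m ∈ ℤ and r ∈ ℤ + 1/2. -/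
/-- For any 2-cocycle ᾱ on the Neveu–Schwarz type algebra 𝒮̄^{1/2},
ᾱ(W_m, G_r) = 0 for all m ∈ ℤ and r ∈ ℤ + 1/2. -/
theorem stmt10 (α : Bb → Bb → ℂ) (hα : IsCocycle (1/2) α) :
    ∀ m r : ℤ, α (Bb.W m) (Bb.G r) = 0 := by
  intro n r
  have h := hα.2 (Bb.L 0) (Bb.W n) (Bb.G r)
  simp only [brE, parity, Nat.zero_mul, pow_zero, one_mul] at h
  rw [show (0:ℤ) + n = n by ring, show (0:ℤ) + r = r by ring] at h
  have h1 : apL α (Bb.L 0) (0 : Bb →₀ ℂ) = 0 := by simp [apL]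
  have h2 : apR α (Finsupp.single (Bb.W n) (((0:ℤ):ℂ) + n)) (Bb.G r)
      = (n : ℂ) * α (Bb.W n) (Bb.G r) := by
    rw [apR, Finsupp.sum_single_index (by ring)]; push_cast; ring
  have h3 : apL α (Bb.W n) (Finsupp.single (Bb.G r) ((r:ℂ) + ((1/2:ℚ):ℂ)))
      = ((r:ℂ) + (1/2:ℂ)) * α (Bb.W n) (Bb.G r) := by
    rw [apL, Finsupp.sum_single_index (by ring)]
    norm_num
  rw [h1, h2, h3] at h
  have key : ((n:ℂ) + ((r:ℂ) + 1/2)) * α (Bb.W n) (Bb.G r) = 0 := by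
    linear_combination -h
  rcases mul_eq_zero.1 key with hc | hc
  · exfalso
    have h4 : ((2 * (n + r) : ℤ) : ℂ) = -1 := by push_cast; linear_combination 2 * hc
    have h5 : (2 * (n + r) : ℤ) = -1 := by exact_mod_cast h4
    omega
  · exact hc
end
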